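/- arXiv:0908.4569 — 3 statements merged into one kernel-verified Lean document; each statement's English description precedes it below -/
import Mathlib

section
/- If α > 0 and f ∈ (α/(1+α), 1), then there exists a unique H > 0 satisfying (1−f)·H = (1/α)·log(1 + (α/(1+α))·H). -/
/-!
Put `c = α/(1+α)` and `m = α(1-f)`, so that the equation reads `φ H = 0` for
`φ H = log (1 + c H) - m H`. The hypotheses on `f` say exactly `0 < m < c`. The function `φ` is
strictly concave with `φ 0 = 0`; it is positive for small `H > 0` because `φ' 0 = c - m > 0`, and
negative for large `H` because `log` grows sublinearly. The intermediate value theorem gives a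
positive zero, and strict concavity forbids two: below a positive zero `H₂`, `φ` lies strictly
above the chord from `(0, 0)` to `(H₂, 0)`.
-/

open Real Set

theorem StrictConcaveOn.pos_of_lt_of_nonneg {φ : ℝ → ℝ} (hφ : StrictConcaveOn ℝ (Ici 0) φ)
    (h0 : φ 0 = 0) {a b : ℝ} (ha : 0 < a) (hab : a < b) (hb : 0 ≤ φ b) : 0 < φ a := by
  have hb0 : 0 < b := ha.trans hab
  have hchord := hφ.2 (mem_Ici.2 le_rfl) hb0.le hb0.ne (sub_pos.2 ((div_lt_one hb0).2 hab))
    (div_pos ha hb0) (sub_add_cancel 1 (a / b))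
  simp only [smul_eq_mul, mul_zero, zero_add, h0, div_mul_cancel₀ a hb0.ne'] at hchord
  exact (mul_nonneg (div_pos ha hb0).le hb).trans_lt hchord

theorem StrictConcaveOn.existsUnique_pos_eq_zero {φ : ℝ → ℝ} (hφ : StrictConcaveOn ℝ (Ici 0) φ)
    (hcont : ContinuousOn φ (Ici 0)) (h0 : φ 0 = 0) {a b : ℝ} (ha : 0 < a) (hb : 0 < b)
    (hpos : 0 < φ a) (hneg : φ b < 0) : ∃! x, 0 < x ∧ φ x = 0 := by
  have hsub : uIcc a b ⊆ Ici 0 := fun y hy => (le_min ha.le hb.le).trans hy.1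
  obtain ⟨x, hx, hx0⟩ := intermediate_value_uIcc (hcont.mono hsub)
    (mem_uIcc.2 (Or.inr ⟨hneg.le, hpos.le⟩))
  have hx_pos : 0 < x := (lt_min ha hb).trans_le hx.1
  refine ⟨x, ⟨hx_pos, hx0⟩, fun y ⟨hy, hy0⟩ => ?_⟩
  rcases lt_trichotomy y x with h | rfl | h
  · exact absurd hy0 (hφ.pos_of_lt_of_nonneg h0 hy h hx0.ge).ne'
  · rfl
  · exact absurd hx0 (hφ.pos_of_lt_of_nonneg h0 hx_pos h hy0.ge).ne'

section LogOneAddMul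

variable {c m : ℝ}

theorem strictConcaveOn_log_one_add_mul_sub_mul (hc : 0 < c) (m : ℝ) :
    StrictConcaveOn ℝ (Ici 0) fun x => log (1 + c * x) - m * x := by
  refine ⟨convex_Ici 0, fun x hx y hy hxy a b ha hb hab => ?_⟩
  have hlog := strictConcaveOn_log_Ioi.2 (x := 1 + c * x) (y := 1 + c * y)
    (by simp only [mem_Ioi]; nlinarith [mem_Ici.1 hx])
    (by simp only [mem_Ioi]; nlinarith [mem_Ici.1 hy])
    (fun h => hxy (mul_left_cancel₀ hc.ne' (add_left_cancel h))) ha hb hab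
  have harg : a • (1 + c * x) + b • (1 + c * y) = 1 + c * (a • x + b • y) := by
    simp only [smul_eq_mul]; linear_combination hab
  rw [harg] at hlog
  simp only [smul_eq_mul] at hlog ⊢
  linarith

theorem continuousOn_log_one_add_mul_sub_mul (hc : 0 ≤ c) (m : ℝ) :
    ContinuousOn (fun x => log (1 + c * x) - m * x) (Ici 0) :=
  (ContinuousOn.log (by fun_prop) fun x hx => by nlinarith [mem_Ici.1 hx]).sub (by fun_prop)

theorem mul_lt_log_one_add_mul (hm : 0 < m) (hmc : m < c) :
    m * ((c - m) / (2 * c * m)) < log (1 + c * ((c - m) / (2 * c * m))) := by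
  have hc : 0 < c := hm.trans hmc
  have hy : 1 + c * ((c - m) / (2 * c * m)) = (c + m) / (2 * m) := by field_simp; ring
  have hlhs : m * ((c - m) / (2 * c * m)) = (c - m) / (2 * c) := by field_simp
  have hbound : 1 - ((c + m) / (2 * m))⁻¹ = (c - m) / (c + m) := by field_simp; ring
  rw [hy, hlhs]
  refine lt_of_lt_of_le ?_ (one_sub_inv_le_log_of_pos (by positivity))
  rw [hbound]
  exact div_lt_div_of_pos_left (sub_pos.2 hmc) (by positivity) (by linarith)

theorem log_one_add_mul_lt_mul (hc : 0 < c) (hm : 0 < m) :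
    log (1 + c * (2 * c / m ^ 2)) < m * (2 * c / m ^ 2) := by
  have hmx : 0 < m * (2 * c / m ^ 2) := by positivity
  rw [log_lt_iff_lt_exp (by positivity)]
  refine lt_of_lt_of_le ?_ (quadratic_le_exp_of_nonneg hmx.le)
  have hsq : (m * (2 * c / m ^ 2)) ^ 2 / 2 = c * (2 * c / m ^ 2) := by field_simp
  linarith

theorem existsUnique_pos_log_one_add_mul_eq_mul (hm : 0 < m) (hmc : m < c) :
    ∃! x, 0 < x ∧ log (1 + c * x) = m * x := by
  have hc : 0 < c := hm.trans hmc
  simpa only [sub_eq_zero] using (strictConcaveOn_log_one_add_mul_sub_mul hc m)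
    |>.existsUnique_pos_eq_zero (continuousOn_log_one_add_mul_sub_mul hc.le m)
      (by simp) (by positivity : 0 < (c - m) / (2 * c * m)) (by positivity : 0 < 2 * c / m ^ 2)
      (sub_pos.2 (mul_lt_log_one_add_mul hm hmc)) (sub_neg.2 (log_one_add_mul_lt_mul hc hm))

end LogOneAddMul

/-- For `α > 0` and `f ∈ (α/(1+α), 1)` there exists a unique `H > 0` with
`(1−f)·H = (1/α)·log(1 + (α/(1+α))·H)`. -/
theorem exists_unique_H (α f : ℝ) (hα : 0 < α) (hf1 : α / (1 + α) < f) (hf2 : f < 1) :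
    ∃! H : ℝ, 0 < H ∧ (1 - f) * H = (1 / α) * Real.log (1 + (α / (1 + α)) * H) := by
  have hα1 : 0 < 1 + α := by linarith
  have hmc : α * (1 - f) < α / (1 + α) := by
    have h1f : 1 - f < 1 / (1 + α) := by
      rw [show 1 / (1 + α) = 1 - α / (1 + α) by field_simp; ring]; linarith
    calc α * (1 - f) < α * (1 / (1 + α)) := mul_lt_mul_of_pos_left h1f hα
      _ = α / (1 + α) := by ring
  refine (existsUnique_congr fun H => and_congr_right fun _ => ?_).2
    (existsUnique_pos_log_one_add_mul_eq_mul (mul_pos hα (sub_pos.2 hf2)) hmc)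
  rw [one_div_mul_eq_div, eq_div_iff hα.ne', eq_comm]
  ring_nf
end

section
/- If α > 0 and p₀ > 1 − f with 0 < f < 1, then there exists a unique H > 0 satisfying (1−f)·H = (1/α)·log(1 + α·p₀·H). -/
/-!
Substituting `y = 1 + α p₀ H` turns the equation into `log y = k (y - 1)` with
`k = (1 - f) / p₀ ∈ (0, 1)`: a second intersection of `log` with a line through `(1, 0)`.
By strict concavity of `log` the secant slope `log y / (y - 1)` is strictly decreasing on
`(1, ∞)`, which gives uniqueness; existence is the intermediate value theorem, since the line
lies below `log` at `y = 1 / k` (slope `1 > k` at `y = 1`) and above it for large `y`.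
-/

open Real Set

namespace Real

theorem strictAntiOn_log_div_sub_one : StrictAntiOn (fun y => log y / (y - 1)) (Ioi 1) := by
  intro x hx y hy hxy
  simpa using strictConcaveOn_log_Ioi.secant_strict_mono (mem_Ioi.2 one_pos)
    (mem_Ioi.2 (one_pos.trans hx)) (mem_Ioi.2 (one_pos.trans hy)) hx.ne' hy.ne' hxy

theorem mul_inv_sub_one_lt_log_inv {k : ℝ} (hk0 : 0 < k) (hk1 : k < 1) :
    k * (k⁻¹ - 1) < log k⁻¹ := by
  have := log_lt_sub_one_of_pos hk0 hk1.ne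
  rw [log_inv, mul_sub, mul_inv_cancel₀ hk0.ne']
  linarith

theorem log_one_add_two_div_sq_lt {k : ℝ} (hk0 : 0 < k) :
    log (1 + 2 / k ^ 2) < k * (1 + 2 / k ^ 2 - 1) := by
  have hexp := quadratic_le_exp_of_nonneg (by positivity : 0 ≤ 2 / k)
  rw [log_lt_iff_lt_exp (by positivity)]
  calc 1 + 2 / k ^ 2 < 1 + 2 / k + (2 / k) ^ 2 / 2 := by
        have : (2 / k) ^ 2 / 2 = 2 / k ^ 2 := by ring
        linarith [this, (by positivity : 0 < 2 / k)]
    _ ≤ exp (2 / k) := hexp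
    _ = exp (k * (1 + 2 / k ^ 2 - 1)) := by congr 1; field_simp; ring

theorem existsUnique_log_eq_mul_sub_one {k : ℝ} (hk0 : 0 < k) (hk1 : k < 1) :
    ∃! y, 1 < y ∧ log y = k * (y - 1) := by
  have hslope {y : ℝ} (hy : 1 < y) (h : log y = k * (y - 1)) : log y / (y - 1) = k := by
    rw [h, mul_div_cancel_right₀ _ (sub_pos.2 hy).ne']
  set φ : ℝ → ℝ := fun y => log y - k * (y - 1)
  have hφ : ContinuousOn φ (Ioi 1) := by
    refine ContinuousOn.sub (continuousOn_log.mono ?_) (by fun_prop)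
    exact fun y (hy : 1 < y) => (one_pos.trans hy).ne'
  have hlarge : 1 < 1 + 2 / k ^ 2 := lt_add_of_pos_right 1 (by positivity)
  have hsmall : 1 < k⁻¹ := one_lt_inv₀ hk0 |>.2 hk1
  have hzero : (0 : ℝ) ∈ Icc (φ (1 + 2 / k ^ 2)) (φ k⁻¹) :=
    ⟨by linarith [log_one_add_two_div_sq_lt hk0],
      by linarith [mul_inv_sub_one_lt_log_inv hk0 hk1]⟩
  obtain ⟨y, hy, hφy⟩ := isPreconnected_Ioi.intermediate_value hlarge hsmall hφ hzero
  have hy' : log y = k * (y - 1) := sub_eq_zero.1 hφy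
  refine ⟨y, ⟨hy, hy'⟩, fun z ⟨hz, hz'⟩ => ?_⟩
  exact strictAntiOn_log_div_sub_one.injOn hz hy ((hslope hz hz').trans (hslope hy hy').symm)

end Real

theorem exists_unique_H_general_general (α f p₀ : ℝ) (hα : 0 < α) (hf1 : f < 1)
    (hp : 1 - f < p₀) :
    ∃! H : ℝ, 0 < H ∧ (1 - f) * H = (1 / α) * Real.log (1 + α * p₀ * H) := by
  have hp₀ : 0 < p₀ := by linarith
  have hb : 0 < α * p₀ := mul_pos hα hp₀
  set k := (1 - f) / p₀
  have hk0 : 0 < k := div_pos (by linarith) hp₀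
  have hk1 : k < 1 := (div_lt_one hp₀).2 hp
  have hequiv (H : ℝ) : (1 - f) * H = (1 / α) * Real.log (1 + α * p₀ * H) ↔
      Real.log (1 + α * p₀ * H) = k * (1 + α * p₀ * H - 1) := by
    have hline : k * (1 + α * p₀ * H - 1) = α * ((1 - f) * H) := by
      simp only [k]; field_simp; ring
    rw [hline, one_div, eq_inv_mul_iff_mul_eq₀ hα.ne', eq_comm]
  obtain ⟨y, ⟨hy, hlog⟩, huniq⟩ := Real.existsUnique_log_eq_mul_sub_one hk0 hk1
  have hyH : 1 + α * p₀ * ((y - 1) / (α * p₀)) = y := by field_simp; ring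
  refine ⟨(y - 1) / (α * p₀), ⟨div_pos (by linarith) hb, (hequiv _).2 (by rwa [hyH])⟩, ?_⟩
  rintro H ⟨hH, hHeq⟩
  have hHy : 1 + α * p₀ * H = y := huniq _ ⟨by nlinarith, (hequiv H).1 hHeq⟩
  field_simp
  linarith

/-- For `α > 0`, `0 < f < 1` and `p₀ > 1 − f`, there exists a unique `H > 0`
with `(1−f)·H = (1/α)·log(1 + α·p₀·H)`. -/
theorem exists_unique_H_general (α f p₀ : ℝ) (hα : 0 < α) (hf0 : 0 < f) (hf1 : f < 1)
    (hp : 1 - f < p₀) :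
    ∃! H : ℝ, 0 < H ∧ (1 - f) * H = (1 / α) * Real.log (1 + α * p₀ * H) :=
  exists_unique_H_general_general α f p₀ hα hf1 hp
end

section
/- Let φ_lim(α, f) = (1/α)·[−(f − α(1−f)) + log(1/((1+α)(1−f)))]. Then φ_lim(α, f) > 0 for all f ∈ (α/(1+α), 1). -/
/-! With `x = (1 + α)(1 - f)`, the bracket in `φ_lim` is `x - 1 - log x`, and the window
`α / (1 + α) < f < 1` is exactly `0 < x < 1`. Since `log x < x - 1` for `x ≠ 1`, the bracket is
positive, and so is `φ_lim = (x - 1 - log x) / α`. -/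

open Real

lemma sub_one_sub_log_pos {x : ℝ} (hx0 : 0 < x) (hx1 : x ≠ 1) : 0 < x - 1 - log x := by
  linarith [log_lt_sub_one_of_pos hx0 hx1]

lemma mul_one_sub_lt_one_of_div_lt {α f : ℝ} (hα : 0 < 1 + α) (hf : α / (1 + α) < f) :
    (1 + α) * (1 - f) < 1 := by
  have := (div_lt_iff₀ hα).mp hf
  linarith

/-- `φ_lim(α, f) = (1/α)[−(f − α(1−f)) + log(1/((1+α)(1−f)))]` is positive for
all `f ∈ (α/(1+α), 1)`. -/
theorem philim_pos (α f : ℝ) (hα : 0 < α) (hf1 : α / (1 + α) < f) (hf2 : f < 1) :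
    0 < (1 / α) * (-(f - α * (1 - f)) + Real.log (1 / ((1 + α) * (1 - f)))) := by
  set x := (1 + α) * (1 - f) with hx
  have hx0 : 0 < x := mul_pos (by linarith) (by linarith)
  have hx1 : x < 1 := mul_one_sub_lt_one_of_div_lt (by linarith) hf1
  have bracket_eq : -(f - α * (1 - f)) + log (1 / x) = x - 1 - log x := by
    rw [one_div, log_inv, hx]
    ring
  rw [bracket_eq]
  exact mul_pos (one_div_pos.mpr hα) (sub_one_sub_log_pos hx0 hx1.ne)
end
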